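/- arXiv:1110.3508 — 2 statements merged into one kernel-verified Lean document; each statement's English description precedes it below -/
import Mathlib

section
/- Let μ be the countable product, over n ∈ ℕ, of the standard real Gaussian probability measure N(0,1), a probability measure on ℝ^ℕ. For finitely supported sequences c, d : ℕ → ℝ, the squared L²(μ)-distance between the functions ω(c)(z) = exp(√2·i·Σ_n c(n)·z(n)) and ω(d)(z) = exp(√2·i·Σ_n d(n)·z(n)) equals 2(1 − exp(−Σ_n (c(n) − d(n))²)); that is, ∫ |ω(c)(z) − ω(d)(z)|² dμ(z) = 2(1 − e^{−‖c−d‖₂²}). (This is the norm computation in Lemma 3.2 of the paper.) -/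
/-!
With `t n = √2 (c n - d n)`, `|e^{iA} - e^{iB}|² = 2 - 2 cos (A - B)` reduces the integral to
`2 - 2 E[cos (∑ t n z n)]`. A linear combination of independent Gaussians is Gaussian (compare
characteristic functions), so `∑ t n z n` has law `N(0, ∑ t n ²)`, and
`E[cos]` is the real part of its characteristic function at `1`, namely
`exp (-∑ t n ² / 2) = exp (-‖c - d‖₂²)`.
-/

open MeasureTheory ProbabilityTheory
open scoped NNReal

lemma ProbabilityTheory.iIndepFun.map_sum_mul_eq_gaussianReal {ι Ω : Type*}
    {mΩ : MeasurableSpace Ω} {P : Measure Ω} {X : ι → Ω → ℝ} (hX : iIndepFun X P)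
    {m : ι → ℝ} {v : ι → ℝ≥0}
    (hlaw : ∀ i, P.map (X i) = gaussianReal (m i) (v i)) (t : ι → ℝ) (s : Finset ι) :
    P.map (fun ω ↦ ∑ i ∈ s, t i * X i ω)
      = gaussianReal (∑ i ∈ s, t i * m i) (∑ i ∈ s, ‖t i‖₊ ^ 2 * v i) := by
  have := hX.isProbabilityMeasure
  have mX (i : ι) : AEMeasurable (X i) P :=
    .of_map_ne_zero (by rw [hlaw]; exact IsProbabilityMeasure.ne_zero _)
  have hY : iIndepFun (s.restrict fun i ω ↦ t i * X i ω) P :=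
    (hX.comp (fun i x ↦ t i * x) fun i ↦ measurable_const_mul (t i)).restrict s
  refine Measure.ext_of_charFun (funext fun r ↦ ?_)
  rw [hY.charFun_map_fun_finsetSum_eq_prod fun i _ ↦ (mX i).const_mul _]
  simp only [Finset.prod_apply, charFun_map_mul_comp (mX _), hlaw, charFun_gaussianReal,
    ← Complex.exp_sum, Finset.sum_sub_distrib]
  push_cast [Finset.mul_sum, Finset.sum_mul, Finset.sum_div]
  congr 2 <;> refine Finset.sum_congr rfl fun i _ ↦ ?_
  · ring
  · rw [Real.norm_eq_abs, ← Complex.ofReal_pow, sq_abs]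
    push_cast
    ring

lemma ProbabilityTheory.integral_cos_gaussianReal (v : ℝ≥0) :
    ∫ x, Real.cos x ∂(gaussianReal 0 v) = Real.exp (-v / 2) := by
  have hint : Integrable (fun x : ℝ ↦ Complex.exp (x * Complex.I)) (gaussianReal 0 v) :=
    .of_bound (by fun_prop) 1 (.of_forall fun x ↦ (Complex.norm_exp_ofReal_mul_I x).le)
  calc ∫ x, Real.cos x ∂(gaussianReal 0 v)
      = (charFun (gaussianReal 0 v) 1).re := by
        simp only [charFun_apply_real, Complex.ofReal_one, one_mul, ← Complex.exp_ofReal_mul_I_re]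
        exact integral_re hint
    _ = Real.exp (-v / 2) := by
        rw [charFun_gaussianReal, ← Complex.exp_ofReal_re]
        push_cast
        ring_nf

lemma Complex.sq_norm_exp_ofReal_mul_I_sub_exp_ofReal_mul_I (a b : ℝ) :
    ‖exp (a * I) - exp (b * I)‖ ^ 2 = 2 - 2 * Real.cos (a - b) := by
  rw [Complex.sq_norm, Complex.normSq_apply]
  simp only [sub_re, sub_im, exp_ofReal_mul_I_re, exp_ofReal_mul_I_im, Real.cos_sub]
  nlinarith [Real.sin_sq_add_cos_sq a, Real.sin_sq_add_cos_sq b]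

lemma ProbabilityTheory.integral_sq_norm_exp_mul_I_sub_exp_mul_I_of_gaussian {Ω : Type*}
    {mΩ : MeasurableSpace Ω} {P : Measure Ω} {A B : Ω → ℝ} {v : ℝ≥0}
    (hlaw : P.map (fun ω ↦ A ω - B ω) = gaussianReal 0 v) :
    ∫ ω, ‖Complex.exp (A ω * Complex.I) - Complex.exp (B ω * Complex.I)‖ ^ 2 ∂P
      = 2 - 2 * Real.exp (-v / 2) := by
  have hcos : Integrable Real.cos (gaussianReal 0 v) :=
    .of_bound (by fun_prop) 1 (.of_forall fun x ↦ by simpa using Real.abs_cos_le_one x)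
  calc _ = ∫ ω, 2 - 2 * Real.cos (A ω - B ω) ∂P := by
        simp_rw [Complex.sq_norm_exp_ofReal_mul_I_sub_exp_ofReal_mul_I]
    _ = ∫ x, 2 - 2 * Real.cos x ∂(P.map fun ω ↦ A ω - B ω) :=
        (integral_map (f := fun x ↦ 2 - 2 * Real.cos x)
          (.of_map_ne_zero (by rw [hlaw]; exact IsProbabilityMeasure.ne_zero _))
          (by fun_prop)).symm
    _ = _ := by
        rw [hlaw, integral_sub (integrable_const 2) (hcos.const_mul 2), integral_const,
          integral_const_mul, integral_cos_gaussianReal]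
        simp

theorem gaussian_omega_dist_sq_general
    (μ : Measure (ℕ → ℝ))
    (hindep : iIndepFun
      (fun n (z : ℕ → ℝ) => z n) μ)
    (hdist : ∀ n : ℕ, μ.map (fun z : ℕ → ℝ => z n) = gaussianReal 0 1)
    (c d : ℕ →₀ ℝ) :
    ∫ z : ℕ → ℝ,
        ‖Complex.exp ((Real.sqrt 2 : ℂ) * Complex.I *
            ∑ n ∈ c.support ∪ d.support, (c n : ℂ) * (z n : ℂ))
          - Complex.exp ((Real.sqrt 2 : ℂ) * Complex.I *
            ∑ n ∈ c.support ∪ d.support, (d n : ℂ) * (z n : ℂ))‖ ^ 2 ∂μ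
      = 2 * (1 - Real.exp (- ∑ n ∈ c.support ∪ d.support, (c n - d n) ^ 2)) := by
  set s := c.support ∪ d.support
  set t : ℕ → ℝ := fun n ↦ Real.sqrt 2 * (c n - d n)
  have hphase (e : ℕ →₀ ℝ) (z : ℕ → ℝ) :
      (Real.sqrt 2 : ℂ) * Complex.I * ∑ n ∈ s, (e n : ℂ) * (z n : ℂ)
        = ((∑ n ∈ s, Real.sqrt 2 * e n * z n : ℝ) : ℂ) * Complex.I := by
    push_cast
    rw [Finset.mul_sum, Finset.sum_mul]
    exact Finset.sum_congr rfl fun n _ ↦ by ring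
  have hdiff : (fun z : ℕ → ℝ ↦
      ∑ n ∈ s, Real.sqrt 2 * c n * z n - ∑ n ∈ s, Real.sqrt 2 * d n * z n)
        = fun z ↦ ∑ n ∈ s, t n * z n := by
    ext z
    rw [← Finset.sum_sub_distrib]
    exact Finset.sum_congr rfl fun n _ ↦ by ring
  have hlaw :
      μ.map (fun z ↦ ∑ n ∈ s, t n * z n) = gaussianReal 0 (∑ n ∈ s, ‖t n‖₊ ^ 2) := by
    simpa using hindep.map_sum_mul_eq_gaussianReal (m := fun _ ↦ 0) (v := fun _ ↦ 1) hdist t s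
  have hvar :
      ((∑ n ∈ s, ‖t n‖₊ ^ 2 : ℝ≥0) : ℝ) / 2 = ∑ n ∈ s, (c n - d n) ^ 2 := by
    push_cast
    rw [Finset.sum_div]
    refine Finset.sum_congr rfl fun n _ ↦ ?_
    rw [Real.norm_eq_abs, sq_abs, mul_pow, Real.sq_sqrt zero_le_two]
    ring
  simp_rw [hphase]
  rw [integral_sq_norm_exp_mul_I_sub_exp_mul_I_of_gaussian (hdiff ▸ hlaw), neg_div, hvar]
  ring

/-- **Norm computation for the Gaussian functor** (Lemma 3.2).
`μ` is the countable product over `n : ℕ` of the standard Gaussian measure `N(0,1)` on `ℝ`,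
encoded as: `μ` is a probability measure on `ℝ^ℕ` whose coordinate functions are i.i.d.
standard Gaussians.  For finitely supported `c, d : ℕ →₀ ℝ`, the squared `L²(μ)`-distance
between `ω(c)(z) = exp(√2·i·Σ_n c n · z n)` and `ω(d)` equals `2(1 − e^{−‖c−d‖₂²})`. -/
theorem gaussian_omega_dist_sq
    (μ : Measure (ℕ → ℝ)) [IsProbabilityMeasure μ]
    (hindep : iIndepFun
      (fun n (z : ℕ → ℝ) => z n) μ)
    (hdist : ∀ n : ℕ, μ.map (fun z : ℕ → ℝ => z n) = gaussianReal 0 1)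
    (c d : ℕ →₀ ℝ) :
    ∫ z : ℕ → ℝ,
        ‖Complex.exp ((Real.sqrt 2 : ℂ) * Complex.I *
            ∑ n ∈ c.support ∪ d.support, (c n : ℂ) * (z n : ℂ))
          - Complex.exp ((Real.sqrt 2 : ℂ) * Complex.I *
            ∑ n ∈ c.support ∪ d.support, (d n : ℂ) * (z n : ℂ))‖ ^ 2 ∂μ
      = 2 * (1 - Real.exp (- ∑ n ∈ c.support ∪ d.support, (c n - d n) ^ 2)) :=
  gaussian_omega_dist_sq_general μ hindep hdist c d
end

section
/- Let μ be the countable product, over n ∈ ℕ, of the standard real Gaussian probability measure N(0,1), a probability measure on ℝ^ℕ, and let c : ℕ → ℝ be square-summable, i.e. Σ_n c(n)² < ∞. For N ∈ ℕ define ω_N : ℝ^ℕ → ℂ by ω_N(z) = exp(√2·i·Σ_{n<N} c(n)·z(n)). Then (ω_N) is a Cauchy sequence in L²(μ; ℂ), and there exists g ∈ L²(μ; ℂ) such that ω_N → g in L²(μ), |g(z)| = 1 for μ-almost every z, and ∫ g dμ = exp(−Σ_n c(n)²). (This is the extension of the Gaussian exponential map ω to all of ℓ², Lemma 3.2 of the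 paper.) -/
/-!
For independent standard Gaussians the characteristic function of `∑_{n ∈ s} a n * z n` is
`t ↦ exp (-t² ∑_{n ∈ s} (a n)² / 2)`. Hence the `ω_N` are unit vectors of `L²(μ)` with
`⟪ω_M, ω_N⟫ = exp (-∑_{M ≤ n < N} (c n)²)` for `M ≤ N`, so that
`‖ω_N - ω_M‖² = 2 (1 - exp (-∑_{M ≤ n < N} (c n)²))` tends to `0`. Along an a.e. convergent
subsequence `|g| = 1` a.e., and `∫ g = ⟪1, g⟫ = lim ⟪1, ω_N⟫ = exp (-∑ (c n)²)`.
-/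

open MeasureTheory ProbabilityTheory Filter

/-- The partial Gaussian exponential `ω_N(z) = exp(√2·i·Σ_{n<N} c n · z n)`. -/
noncomputable def omegaN (c : ℕ → ℝ) (N : ℕ) (z : ℕ → ℝ) : ℂ :=
  Complex.exp ((Real.sqrt 2 : ℂ) * Complex.I * ∑ n ∈ Finset.range N, (c n : ℂ) * (z n : ℂ))

open Complex
open scoped Topology InnerProductSpace ComplexConjugate

theorem charFun_map_finsetSum_mul_of_iIndepFun_gaussianReal {Ω ι : Type*} {mΩ : MeasurableSpace Ω}
    {P : Measure Ω} {X : ι → Ω → ℝ} (hindep : iIndepFun X P)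
    (hlaw : ∀ i, P.map (X i) = gaussianReal 0 1) (a : ι → ℝ) (s : Finset ι) (t : ℝ) :
    charFun (P.map fun ω ↦ ∑ i ∈ s, a i * X i ω) t = cexp (-(t ^ 2 * ∑ i ∈ s, a i ^ 2) / 2) := by
  have hX (i : ι) :
      HasLaw (fun ω ↦ a i * X i ω) (gaussianReal 0 (.mk (a i ^ 2) (sq_nonneg _))) P := by
    have : HasLaw (X i) (gaussianReal 0 1) P :=
      ⟨aemeasurable_of_map_neZero (by rw [hlaw i]; infer_instance), hlaw i⟩
    simpa using gaussianReal_const_mul this (a i)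
  have hindep' := (hindep.comp _ fun i ↦ measurable_const_mul (a i)).restrict s
  rw [hindep'.charFun_map_fun_finsetSum_eq_prod fun i _ ↦ (hX i).aemeasurable, Finset.prod_apply]
  simp_rw [fun i ↦ (hX i).map_eq, charFun_gaussianReal, ← Complex.exp_sum]
  push_cast
  rw [Finset.mul_sum, neg_div, Finset.sum_div, ← Finset.sum_neg_distrib]
  congr 1
  refine Finset.sum_congr rfl fun i _ ↦ ?_
  ring

theorem cauchySeq_of_norm_eq_one_of_le_re_inner {𝕜 E : Type*} [RCLike 𝕜]
    [SeminormedAddCommGroup E] [InnerProductSpace 𝕜 E] {F : ℕ → E} (hF : ∀ n, ‖F n‖ = 1)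
    {b : ℕ → ℝ} (hb : Tendsto b atTop (𝓝 1))
    (hinner : ∀ m n, m ≤ n → b m ≤ RCLike.re ⟪F m, F n⟫_𝕜) :
    CauchySeq F := by
  refine cauchySeq_of_le_tendsto_0' (fun m ↦ √(2 - 2 * b m)) (fun m n hmn ↦ ?_) ?_
  · refine (le_abs_self _).trans (Real.abs_le_sqrt ?_)
    rw [dist_eq_norm, @norm_sub_sq 𝕜, hF, hF]
    linarith [hinner m n hmn]
  · have : Continuous fun x : ℝ ↦ √(2 - 2 * x) := by fun_prop
    simpa [Function.comp_def] using (this.tendsto 1).comp hb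

theorem MeasureTheory.Lp.ae_norm_eq_of_tendsto {α E : Type*} {m : MeasurableSpace α}
    {μ : Measure α} [NormedAddCommGroup E] {p : ENNReal} [Fact (1 ≤ p)] {f : ℕ → Lp E p μ}
    {g : Lp E p μ} (hfg : Tendsto f atTop (𝓝 g)) {r : ℝ} (hf : ∀ n, ∀ᵐ x ∂μ, ‖f n x‖ = r) :
    ∀ᵐ x ∂μ, ‖g x‖ = r := by
  obtain ⟨φ, -, hφ⟩ := (tendstoInMeasure_of_tendsto_Lp hfg).exists_seq_tendsto_ae
  filter_upwards [ae_all_iff.2 hf, hφ] with x hfx hφx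
  exact tendsto_nhds_unique hφx.norm (tendsto_const_nhds.congr fun n ↦ (hfx (φ n)).symm)

theorem MeasureTheory.L2.tendsto_integral_of_tendsto {α 𝕜 ι : Type*} [RCLike 𝕜]
    {m : MeasurableSpace α} {μ : Measure α} [IsFiniteMeasure μ] {l : Filter ι}
    {f : ι → Lp 𝕜 2 μ} {g : Lp 𝕜 2 μ} (hfg : Tendsto f l (𝓝 g)) :
    Tendsto (fun i ↦ ∫ x, f i x ∂μ) l (𝓝 (∫ x, g x ∂μ)) := by
  let one : Lp 𝕜 2 μ := indicatorConstLp 2 MeasurableSet.univ (measure_ne_top μ _) 1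
  have := (tendsto_const_nhds (x := one)).inner (𝕜 := 𝕜) hfg
  simpa only [one, L2.inner_indicatorConstLp_one, setIntegral_univ] using this

section omegaN

variable (c : ℕ → ℝ)

theorem omegaN_eq_cexp_ofReal_mul_I (N : ℕ) (z : ℕ → ℝ) :
    omegaN c N z = cexp (↑(√2 * ∑ n ∈ Finset.range N, c n * z n) * I) := by
  rw [omegaN]
  congr 1
  push_cast
  ring

theorem norm_omegaN (N : ℕ) (z : ℕ → ℝ) : ‖omegaN c N z‖ = 1 := by
  rw [omegaN_eq_cexp_ofReal_mul_I, norm_exp_ofReal_mul_I]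

theorem measurable_omegaN (N : ℕ) : Measurable (omegaN c N) := by
  unfold omegaN; fun_prop

theorem memLp_omegaN (μ : Measure (ℕ → ℝ)) [IsFiniteMeasure μ] (p : ENNReal) (N : ℕ) :
    MemLp (omegaN c N) p μ :=
  .of_bound (measurable_omegaN c N).aestronglyMeasurable 1
    (.of_forall fun z ↦ (norm_omegaN c N z).le)

theorem omegaN_mul_conj_omegaN {M N : ℕ} (hMN : M ≤ N) (z : ℕ → ℝ) :
    omegaN c N z * conj (omegaN c M z) =
      cexp ((Real.sqrt 2 : ℂ) * I * ∑ n ∈ Finset.Ico M N, (c n : ℂ) * (z n : ℂ)) := by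
  rw [omegaN, omegaN, ← exp_conj, ← exp_add, Finset.sum_Ico_eq_sub _ hMN]
  simp only [map_mul, conj_I, conj_ofReal, map_sum]
  congr 1
  ring

variable {μ : Measure (ℕ → ℝ)}
  (hindep : iIndepFun (fun n (z : ℕ → ℝ) ↦ z n) μ)
  (hdist : ∀ n, μ.map (fun z : ℕ → ℝ ↦ z n) = gaussianReal 0 1)
include hindep hdist

theorem integral_cexp_sqrt_two_mul_I_finsetSum (s : Finset ℕ) :
    ∫ z, cexp ((Real.sqrt 2 : ℂ) * I * ∑ n ∈ s, (c n : ℂ) * (z n : ℂ)) ∂μ =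
      Real.exp (-∑ n ∈ s, c n ^ 2) := by
  have h := charFun_map_finsetSum_mul_of_iIndepFun_gaussianReal hindep hdist c s √2
  have hsum : Measurable fun z : ℕ → ℝ ↦ ∑ n ∈ s, c n * z n :=
    Finset.measurable_fun_sum s fun n _ ↦ by fun_prop
  rw [charFun_apply_real, integral_map hsum.aemeasurable (by fun_prop)] at h
  convert h using 1
  · congr 2 with z
    congr 1
    push_cast
    ring
  · rw [← ofReal_pow, Real.sq_sqrt zero_le_two, ofReal_exp]
    push_cast
    congr 1
    ring

theorem integral_omegaN (N : ℕ) :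
    ∫ z, omegaN c N z ∂μ = Real.exp (-∑ n ∈ Finset.range N, c n ^ 2) :=
  integral_cexp_sqrt_two_mul_I_finsetSum c hindep hdist _

theorem inner_toLp_omegaN {M N : ℕ} (hMN : M ≤ N) (hM : MemLp (omegaN c M) 2 μ)
    (hN : MemLp (omegaN c N) 2 μ) :
    ⟪hM.toLp, hN.toLp⟫_ℂ = Real.exp (-∑ n ∈ Finset.Ico M N, c n ^ 2) := by
  rw [L2.inner_def, ← integral_cexp_sqrt_two_mul_I_finsetSum c hindep hdist]
  refine integral_congr_ae ?_
  filter_upwards [hM.coeFn_toLp, hN.coeFn_toLp] with z hMz hNz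
  rw [RCLike.inner_apply, hMz, hNz, omegaN_mul_conj_omegaN c hMN]

end omegaN

/-- **Extension of the Gaussian exponential map to all of `ℓ²`** (Lemma 3.2).
`μ` is the countable product over `n : ℕ` of the standard Gaussian measure `N(0,1)` on `ℝ`,
encoded as: `μ` is a probability measure on `ℝ^ℕ` whose coordinate functions are i.i.d.
standard Gaussians.  If `Σ_n (c n)² < ∞` then the functions `ω_N` lie in `L²(μ; ℂ)`, form a
Cauchy sequence there, and converge in `L²(μ)` to some `g` with `|g| = 1` a.e. and
`∫ g dμ = exp(−Σ_n (c n)²)`. -/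
theorem gaussian_omega_extension
    (μ : Measure (ℕ → ℝ)) [IsProbabilityMeasure μ]
    (hindep : iIndepFun (m := fun _ : ℕ => (inferInstance : MeasurableSpace ℝ))
      (fun n (z : ℕ → ℝ) => z n) μ)
    (hdist : ∀ n : ℕ, μ.map (fun z : ℕ → ℝ => z n) = gaussianReal 0 1)
    (c : ℕ → ℝ) (hc : Summable fun n => (c n) ^ 2) :
    ∃ hmem : ∀ N : ℕ, MemLp (omegaN c N) 2 μ,
      CauchySeq (fun N : ℕ => (hmem N).toLp (omegaN c N)) ∧
      ∃ g : Lp ℂ 2 μ,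
        Tendsto (fun N : ℕ => (hmem N).toLp (omegaN c N)) atTop (nhds g) ∧
        (∀ᵐ z ∂μ, ‖(g : (ℕ → ℝ) → ℂ) z‖ = 1) ∧
        ∫ z, (g : (ℕ → ℝ) → ℂ) z ∂μ = (Real.exp (- ∑' n, (c n) ^ 2) : ℂ) := by
  have hmem := memLp_omegaN c μ 2
  have hS : Tendsto (fun N ↦ ∑ n ∈ Finset.range N, c n ^ 2) atTop (𝓝 (∑' n, c n ^ 2)) :=
    hc.hasSum.tendsto_sum_nat
  have hF_ae (N : ℕ) : ∀ᵐ z ∂μ, ‖(hmem N).toLp (omegaN c N) z‖ = 1 := by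
    filter_upwards [(hmem N).coeFn_toLp] with z hz
    rw [hz, norm_omegaN]
  have hF_norm (N : ℕ) : ‖(hmem N).toLp (omegaN c N)‖ = 1 := by
    rw [← pow_eq_one_iff_of_nonneg (norm_nonneg _) two_ne_zero, ← inner_self_eq_norm_sq (𝕜 := ℂ),
      inner_toLp_omegaN c hindep hdist le_rfl]
    simp
  have hcauchy : CauchySeq fun N ↦ (hmem N).toLp (omegaN c N) := by
    refine cauchySeq_of_norm_eq_one_of_le_re_inner (𝕜 := ℂ) hF_norm
      (b := fun M ↦ Real.exp (∑ n ∈ Finset.range M, c n ^ 2 - ∑' n, c n ^ 2)) ?_ fun M N hMN ↦ ?_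
    · have := (Real.continuous_exp.tendsto _).comp (hS.sub_const (∑' n, c n ^ 2))
      rwa [sub_self, Real.exp_zero] at this
    · rw [inner_toLp_omegaN c hindep hdist hMN, RCLike.re_to_complex, ofReal_re, Real.exp_le_exp,
        Finset.sum_Ico_eq_sub _ hMN]
      linarith [hc.sum_le_tsum (Finset.range N) fun n _ ↦ sq_nonneg (c n)]
  obtain ⟨g, hg⟩ := cauchySeq_tendsto_of_complete hcauchy
  refine ⟨hmem, hcauchy, g, hg, Lp.ae_norm_eq_of_tendsto hg hF_ae,
    tendsto_nhds_unique (L2.tendsto_integral_of_tendsto hg) ?_⟩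
  simp_rw [integral_congr_ae (hmem _).coeFn_toLp, integral_omegaN c hindep hdist]
  exact (continuous_ofReal.comp Real.continuous_exp).tendsto _ |>.comp hS.neg
end
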